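/- arXiv:2009.00517 — 2 statements merged into one kernel-verified Lean document; each statement's English description precedes it below -/
import Mathlib

section
/- Let γ₁, …, γ_K be independent exponential random variables with distinct means λ₁, …, λ_K > 0. Then E[log₂(1 + Σ_k γ_k)] = −(1/ln 2) Σ_{i=1}^K e^{1/λ_i} Ei(−1/λ_i) Π_{j≠i} λ_i/(λ_i − λ_j). -/
/-!
For `s ≥ 0`, Frullani's integral for `e^{-t}` gives
`log (1 + s) = ∫₀^∞ e^{-t} (1 - e^{-ts}) / t dt`, so by Tonelli `E log (1 + S) = ∫₀^∞ e^{-t} (1 - E e^{-tS}) / t dt` for every nonnegative `S`.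
For `S = Σ γ_k` with independent exponential `γ_k` of rates `μ_k = 1 / λ_k` we have
`E e^{-tS} = ∏ μ_k / (t + μ_k)`, and Lagrange interpolation at the nodes `-μ_k` expands
`1 - ∏ μ_k / (t + μ_k)` into partial fractions `Σ_j c_j t / (t + μ_j)` with
`c_j = ∏_{i ≠ j} μ_i / (μ_i - μ_j) = ∏_{i ≠ j} λ_j / (λ_j - λ_i)`.
Each term contributes `c_j ∫₀^∞ e^{-t} / (t + μ_j) dt = -c_j e^{μ_j} Ei (-μ_j)`.
-/

open MeasureTheory ProbabilityTheory Real

/-- The exponential integral `Ei(x) = -∫_{-x}^∞ e^{-t}/t dt` for `x < 0`. -/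
noncomputable def Ei (x : ℝ) : ℝ := -∫ t in Set.Ioi (-x), Real.exp (-t) / t

open Set Filter Topology

namespace Lagrange

variable {F ι : Type*} [Field F] [DecidableEq ι] {s : Finset ι} {v : ι → F}

theorem sum_nodalWeight_mul_inv_sub (hvs : Set.InjOn v s) (hs : s.Nonempty) {x : F}
    (hx : ∀ i ∈ s, x ≠ v i) :
    ∑ i ∈ s, nodalWeight s v i * (x - v i)⁻¹ = (∏ i ∈ s, (x - v i))⁻¹ := by
  have h := eval_interpolate_not_at_node 1 hx
  simp only [interpolate_one hvs hs, Polynomial.eval_one, eval_nodal, Pi.one_apply,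
    mul_one] at h
  exact eq_inv_of_mul_eq_one_right h.symm

end Lagrange

section PartialFractions

variable {F ι : Type*} [Field F] [DecidableEq ι] {s : Finset ι} {μ : ι → F} {t : F}

theorem prod_div_add_eq_sum (hμ : Set.InjOn μ s) (hs : s.Nonempty)
    (ht : ∀ k ∈ s, t + μ k ≠ 0) :
    ∏ k ∈ s, μ k / (t + μ k) =
      ∑ j ∈ s, (∏ i ∈ s.erase j, μ i / (μ i - μ j)) * (μ j / (t + μ j)) := by
  have hnodes : Set.InjOn (-μ) s := fun i hi j hj h => hμ hi hj (neg_injective h)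
  have h := Lagrange.sum_nodalWeight_mul_inv_sub hnodes hs (x := t) fun k hk h =>
    ht k hk (by simpa [eq_neg_iff_add_eq_zero] using h)
  simp only [Pi.neg_apply, sub_neg_eq_add, Lagrange.nodalWeight, neg_add_eq_sub] at h
  rw [Finset.prod_div_distrib, div_eq_mul_inv, ← h, Finset.mul_sum]
  refine Finset.sum_congr rfl fun j hj => ?_
  rw [← Finset.mul_prod_erase s μ hj, Finset.prod_div_distrib, div_eq_mul_inv _ (t + μ j)]
  simp only [div_eq_mul_inv, Finset.prod_inv_distrib]
  ring

theorem sum_prod_div_sub_eq_one (hμ : Set.InjOn μ s) (hs : s.Nonempty)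
    (hμ0 : ∀ k ∈ s, μ k ≠ 0) :
    ∑ j ∈ s, ∏ i ∈ s.erase j, μ i / (μ i - μ j) = 1 := by
  have h := prod_div_add_eq_sum hμ hs (t := 0) (by simpa using hμ0)
  simp only [zero_add] at h
  rwa [Finset.prod_eq_one fun k hk => div_self (hμ0 k hk),
    Finset.sum_congr rfl fun j hj => by rw [div_self (hμ0 j hj), mul_one], eq_comm] at h

theorem one_sub_prod_div_add_eq_sum (hμ : Set.InjOn μ s) (hμ0 : ∀ k ∈ s, μ k ≠ 0)
    (ht : ∀ k ∈ s, t + μ k ≠ 0) :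
    1 - ∏ k ∈ s, μ k / (t + μ k) =
      ∑ j ∈ s, (∏ i ∈ s.erase j, μ i / (μ i - μ j)) * (t / (t + μ j)) := by
  rcases s.eq_empty_or_nonempty with rfl | hs
  · simp
  rw [← sum_prod_div_sub_eq_one hμ hs hμ0, prod_div_add_eq_sum hμ hs ht,
    ← Finset.sum_sub_distrib]
  refine Finset.sum_congr rfl fun j hj => ?_
  rw [← mul_one_sub, one_sub_div (ht j hj), add_sub_cancel_right]

end PartialFractions

theorem inv_div_inv_sub_inv {F : Type*} [Field F] {a b : F} (ha : a ≠ 0) (hb : b ≠ 0) :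
    a⁻¹ / (a⁻¹ - b⁻¹) = b / (b - a) := by
  rw [inv_sub_inv ha hb, div_div_eq_mul_div, inv_mul_cancel_left₀ ha]

noncomputable def logKernel (s t : ℝ) : ℝ := exp (-t) * (1 - exp (-t * s)) / t

theorem logKernel_mem_Icc {s t : ℝ} (hs : 0 ≤ s) (ht : 0 < t) :
    logKernel s t ∈ Icc 0 (s * exp (-t)) := by
  have hle : 1 - exp (-t * s) ≤ t * s := by linarith [add_one_le_exp (-t * s)]
  have hnonneg : 0 ≤ 1 - exp (-t * s) := by
    rw [sub_nonneg, exp_le_one_iff]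
    nlinarith
  refine ⟨by unfold logKernel; positivity, ?_⟩
  rw [logKernel, div_le_iff₀ ht]
  calc exp (-t) * (1 - exp (-t * s)) ≤ exp (-t) * (t * s) := by gcongr
    _ = s * exp (-t) * t := by ring

theorem measurable_logKernel : Measurable (Function.uncurry logKernel) := by
  unfold logKernel
  fun_prop

theorem integrableOn_logKernel {s : ℝ} (hs : 0 ≤ s) : IntegrableOn (logKernel s) (Ioi 0) := by
  refine Integrable.mono' ((exp_neg_integrableOn_Ioi 0 one_pos).const_mul s)
    (measurable_logKernel.comp measurable_prodMk_left).aestronglyMeasurable ?_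
  refine ae_restrict_of_forall_mem measurableSet_Ioi fun t (ht : 0 < t) => ?_
  obtain ⟨h0, h1⟩ := logKernel_mem_Icc hs ht
  rwa [Real.norm_of_nonneg h0, neg_one_mul]

theorem integral_logKernel {s : ℝ} (hs : 0 ≤ s) : ∫ t in Ioi 0, logKernel s t = log (1 + s) := by
  have hfrullani : ∀ t : ℝ, t⁻¹ • (exp (-(1 * t)) - exp (-((1 + s) * t))) = logKernel s t :=
    fun t => by
      rw [logKernel, smul_eq_mul, one_mul, show -((1 + s) * t) = -t + -t * s by ring, exp_add]
      ring
  have hexp : Continuous fun x : ℝ => exp (-x) := by fun_prop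
  have h := Frullani.integral_Ioi_eq (hexp.locallyIntegrable.locallyIntegrableOn _) one_pos
    (by linarith : (0 : ℝ) < 1 + s) ((hexp.tendsto' 0 1 (by simp)).mono_left nhdsWithin_le_nhds)
    tendsto_exp_neg_atTop_nhds_zero (by simpa only [hfrullani] using integrableOn_logKernel hs)
  simpa only [hfrullani, div_one, smul_eq_mul, sub_zero, mul_one] using h

theorem lintegral_ofReal_logKernel {s : ℝ} (hs : 0 ≤ s) :
    ∫⁻ t in Ioi 0, ENNReal.ofReal (logKernel s t) = ENNReal.ofReal (log (1 + s)) := by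
  rw [← ofReal_integral_eq_lintegral_ofReal (integrableOn_logKernel hs)
    (ae_restrict_of_forall_mem measurableSet_Ioi fun t ht => (logKernel_mem_Icc hs ht).1),
    integral_logKernel hs]

section LogMoment

variable {Ω : Type*} [MeasurableSpace Ω] {P : Measure Ω} {X : Ω → ℝ}

theorem integrable_exp_neg_mul_of_nonneg [IsFiniteMeasure P] (hX : AEMeasurable X P)
    (hX0 : ∀ᵐ ω ∂P, 0 ≤ X ω) {t : ℝ} (ht : 0 ≤ t) :
    Integrable (fun ω => exp (-t * X ω)) P := by
  refine Integrable.of_bound (by fun_prop) 1 ?_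
  filter_upwards [hX0] with ω hω
  rw [Real.norm_of_nonneg (exp_pos _).le, exp_le_one_iff]
  nlinarith

theorem integrable_logKernel_comp [IsFiniteMeasure P] (hX : AEMeasurable X P)
    (hX0 : ∀ᵐ ω ∂P, 0 ≤ X ω) {t : ℝ} (ht : 0 ≤ t) :
    Integrable (fun ω => logKernel (X ω) t) P :=
  (((integrable_const 1).sub (integrable_exp_neg_mul_of_nonneg hX hX0 ht)).const_mul _).div_const _

theorem integral_logKernel_comp [IsProbabilityMeasure P] (hX : AEMeasurable X P)
    (hX0 : ∀ᵐ ω ∂P, 0 ≤ X ω) {t : ℝ} (ht : 0 ≤ t) :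
    ∫ ω, logKernel (X ω) t ∂P = exp (-t) * (1 - mgf X P (-t)) / t := by
  simp only [logKernel, integral_div, integral_const_mul, integral_sub (integrable_const 1)
    (integrable_exp_neg_mul_of_nonneg hX hX0 ht), integral_const, probReal_univ, one_smul, mgf]

theorem lintegral_ofReal_log_one_add_eq [IsProbabilityMeasure P] (hX : AEMeasurable X P)
    (hX0 : ∀ᵐ ω ∂P, 0 ≤ X ω) :
    ∫⁻ ω, ENNReal.ofReal (log (1 + X ω)) ∂P =
      ∫⁻ t in Ioi 0, ENNReal.ofReal (exp (-t) * (1 - mgf X P (-t)) / t) := by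
  have hmeas : AEMeasurable (fun p : Ω × ℝ => ENNReal.ofReal (logKernel (X p.1) p.2))
      (P.prod (volume.restrict (Ioi 0))) :=
    measurable_logKernel.ennreal_ofReal.comp_aemeasurable
      (f := fun p : Ω × ℝ => (X p.1, p.2)) (hX.comp_fst.prodMk measurable_snd.aemeasurable)
  calc ∫⁻ ω, ENNReal.ofReal (log (1 + X ω)) ∂P
      = ∫⁻ ω, (∫⁻ t in Ioi 0, ENNReal.ofReal (logKernel (X ω) t)) ∂P := by
        refine lintegral_congr_ae ?_
        filter_upwards [hX0] with ω hω using (lintegral_ofReal_logKernel hω).symm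
    _ = ∫⁻ t in Ioi 0, (∫⁻ ω, ENNReal.ofReal (logKernel (X ω) t) ∂P) :=
        lintegral_lintegral_swap hmeas
    _ = ∫⁻ t in Ioi 0, ENNReal.ofReal (exp (-t) * (1 - mgf X P (-t)) / t) := by
        refine setLIntegral_congr_fun measurableSet_Ioi fun t (ht : 0 < t) => ?_
        rw [← integral_logKernel_comp hX hX0 ht.le,
          ofReal_integral_eq_lintegral_ofReal (integrable_logKernel_comp hX hX0 ht.le)]
        filter_upwards [hX0] with ω hω using (logKernel_mem_Icc hω ht).1

theorem integral_log_one_add_eq [IsProbabilityMeasure P] (hX : AEMeasurable X P)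
    (hX0 : ∀ᵐ ω ∂P, 0 ≤ X ω) :
    ∫ ω, log (1 + X ω) ∂P = ∫ t in Ioi 0, exp (-t) * (1 - mgf X P (-t)) / t := by
  have hlog_nonneg : ∀ᵐ ω ∂P, 0 ≤ log (1 + X ω) := by
    filter_upwards [hX0] with ω hω using log_nonneg (by linarith)
  have hmgf_nonneg : ∀ᵐ t ∂(volume.restrict (Ioi 0)), 0 ≤ exp (-t) * (1 - mgf X P (-t)) / t :=
    ae_restrict_of_forall_mem measurableSet_Ioi fun t (ht : 0 < t) => by
      rw [← integral_logKernel_comp hX hX0 ht.le]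
      exact integral_nonneg_of_ae (by
        filter_upwards [hX0] with ω hω using (logKernel_mem_Icc hω ht).1)
  have hmgf_meas : AEMeasurable (fun t => mgf X P (-t)) (volume.restrict (Ioi 0)) :=
    (AEStronglyMeasurable.integral_prod_right' (f := fun p : ℝ × Ω => exp (-p.1 * X p.2))
      (by fun_prop)).aemeasurable
  rw [integral_eq_lintegral_of_nonneg_ae hlog_nonneg
      (measurable_log.comp_aemeasurable (hX.const_add 1)).aestronglyMeasurable,
    integral_eq_lintegral_of_nonneg_ae hmgf_nonneg
      (by fun_prop : AEMeasurable _ _).aestronglyMeasurable,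
    lintegral_ofReal_log_one_add_eq hX hX0]

end LogMoment

theorem mgf_id_withDensity_exponentialPDF {r t : ℝ} (hr : 0 < r) (ht : t < r) :
    mgf id (volume.withDensity (exponentialPDF r)) t = r / (r - t) := by
  have hdensity : ∀ x, (exponentialPDF r x).toReal • exp (t * x) =
      (Ici 0).indicator (fun x => r * exp ((t - r) * x)) x := fun x => by
    rw [exponentialPDF, ENNReal.toReal_ofReal (exponentialPDFReal_nonneg hr x), smul_eq_mul]
    by_cases hx : 0 ≤ x
    · rw [indicator_of_mem (mem_Ici.2 hx), exponentialPDFReal, gammaPDFReal, if_pos hx]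
      simp only [rpow_one, Gamma_one, div_one, sub_self, rpow_zero, mul_one, mul_assoc, ← exp_add]
      ring_nf
    · simp [exponentialPDFReal, gammaPDFReal, hx]
  have hmeas : Measurable (exponentialPDF r) := (measurable_exponentialPDFReal r).ennreal_ofReal
  rw [mgf, integral_withDensity_eq_integral_toReal_smul hmeas
    (ae_of_all _ fun _ => ENNReal.ofReal_lt_top)]
  simp only [id, hdensity]
  rw [integral_indicator measurableSet_Ici, integral_Ici_eq_integral_Ioi, integral_const_mul,
    integral_exp_mul_Ioi (by linarith) 0, mul_zero, exp_zero, ← neg_sub, div_neg, neg_div,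
    neg_neg, mul_one_div]

theorem aemeasurable_of_map_eq_withDensity_exponentialPDF {Ω : Type*} [MeasurableSpace Ω]
    {P : Measure Ω} {X : Ω → ℝ} {r : ℝ} (hr : 0 < r)
    (hmap : P.map X = volume.withDensity (exponentialPDF r)) : AEMeasurable X P := by
  refine AEMeasurable.of_map_ne_zero ?_
  rw [hmap]
  exact (isProbabilityMeasure_expMeasure hr).ne_zero

theorem ae_nonneg_of_map_eq_withDensity_exponentialPDF {Ω : Type*} [MeasurableSpace Ω]
    {P : Measure Ω} {X : Ω → ℝ} {r : ℝ} (hX : AEMeasurable X P)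
    (hmap : P.map X = volume.withDensity (exponentialPDF r)) : ∀ᵐ ω ∂P, 0 ≤ X ω := by
  have h : P.map X (Iio 0) = 0 := by
    rw [hmap, withDensity_apply _ measurableSet_Iio, lintegral_exponentialPDF_of_nonpos le_rfl]
  rw [Measure.map_apply_of_aemeasurable hX measurableSet_Iio] at h
  simp only [ae_iff, not_le]
  exact h

theorem mgf_sum_of_map_eq_withDensity_exponentialPDF {ι Ω : Type*} [MeasurableSpace Ω]
    {P : Measure Ω} {X : ι → Ω → ℝ} {r : ι → ℝ} (hindep : iIndepFun X P)
    (hX : ∀ k, AEMeasurable (X k) P) (hr : ∀ k, 0 < r k)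
    (hmap : ∀ k, P.map (X k) = volume.withDensity (exponentialPDF (r k)))
    (s : Finset ι) {t : ℝ} (ht : ∀ k ∈ s, t < r k) :
    mgf (∑ k ∈ s, X k) P t = ∏ k ∈ s, r k / (r k - t) := by
  rw [hindep.mgf_sum₀ hX s]
  refine Finset.prod_congr rfl fun k hk => ?_
  rw [← mgf_id_map (hX k), hmap k, mgf_id_withDensity_exponentialPDF (hr k) (ht k hk)]

theorem integral_exp_neg_div_add (μ : ℝ) :
    ∫ t in Ioi 0, exp (-t) / (t + μ) = -(exp μ * Ei (-μ)) := by
  have hshift : ∫ t in Ioi 0, exp (-(t + μ)) / (t + μ) = ∫ u in Ioi μ, exp (-u) / u := by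
    have h := (measurePreserving_add_right (volume : Measure ℝ) μ).setIntegral_preimage_emb
      (measurableEmbedding_addRight μ) (fun u => exp (-u) / u) (Ioi μ)
    rwa [preimage_add_const_Ioi, sub_self] at h
  have hfactor : ∀ t, exp (-t) / (t + μ) = exp μ * (exp (-(t + μ)) / (t + μ)) := fun t => by
    rw [mul_div_assoc', ← exp_add]
    ring_nf
  simp_rw [hfactor]
  rw [integral_const_mul, hshift, Ei, neg_neg, mul_neg, neg_neg]

theorem integrableOn_exp_neg_div_add {μ : ℝ} (hμ : 0 < μ) :
    IntegrableOn (fun t => exp (-t) / (t + μ)) (Ioi 0) := by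
  refine Integrable.mono' ((exp_neg_integrableOn_Ioi 0 one_pos).div_const μ)
    (Measurable.aestronglyMeasurable (by fun_prop)) ?_
  refine ae_restrict_of_forall_mem measurableSet_Ioi fun t (ht : 0 < t) => ?_
  rw [Real.norm_of_nonneg (by positivity), neg_one_mul]
  gcongr
  linarith

section Hypoexponential

variable {ι Ω : Type*} [Fintype ι] [DecidableEq ι] [MeasurableSpace Ω] {P : Measure Ω}
  {X : ι → Ω → ℝ} {r : ι → ℝ}

theorem exp_neg_mul_one_sub_mgf_sum_div (hindep : iIndepFun X P) (hX : ∀ k, AEMeasurable (X k) P)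
    (hr : ∀ k, 0 < r k) (hinj : Function.Injective r)
    (hmap : ∀ k, P.map (X k) = volume.withDensity (exponentialPDF (r k))) {t : ℝ} (ht : 0 < t) :
    exp (-t) * (1 - mgf (∑ k, X k) P (-t)) / t =
      ∑ j, (∏ i ∈ Finset.univ.erase j, r i / (r i - r j)) * (exp (-t) / (t + r j)) := by
  have htr : ∀ k ∈ Finset.univ, t + r k ≠ 0 := fun k _ => by linarith [hr k]
  rw [mgf_sum_of_map_eq_withDensity_exponentialPDF hindep hX hr hmap _
    fun k _ => by linarith [hr k]]
  simp only [sub_neg_eq_add, add_comm (r _) t]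
  rw [one_sub_prod_div_add_eq_sum hinj.injOn (fun k _ => (hr k).ne') htr, Finset.mul_sum,
    Finset.sum_div]
  refine Finset.sum_congr rfl fun j _ => ?_
  field_simp

theorem integral_log_one_add_sum_of_exponential (hindep : iIndepFun X P) (hr : ∀ k, 0 < r k)
    (hinj : Function.Injective r)
    (hmap : ∀ k, P.map (X k) = volume.withDensity (exponentialPDF (r k))) :
    ∫ ω, log (1 + ∑ k, X k ω) ∂P =
      ∑ j, (∏ i ∈ Finset.univ.erase j, r i / (r i - r j)) * -(exp (r j) * Ei (-r j)) := by
  have := hindep.isProbabilityMeasure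
  have hX k : AEMeasurable (X k) P :=
    aemeasurable_of_map_eq_withDensity_exponentialPDF (hr k) (hmap k)
  have hS0 : ∀ᵐ ω ∂P, 0 ≤ (∑ k, X k) ω := by
    filter_upwards [ae_all_iff.2 fun k => ae_nonneg_of_map_eq_withDensity_exponentialPDF (hX k)
      (hmap k)] with ω hω
    rw [Finset.sum_apply]
    exact Finset.sum_nonneg fun k _ => hω k
  calc ∫ ω, log (1 + ∑ k, X k ω) ∂P
      = ∫ t in Ioi 0, exp (-t) * (1 - mgf (∑ k, X k) P (-t)) / t := by
        simpa only [Finset.sum_apply] using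
          integral_log_one_add_eq (Finset.aemeasurable_sum _ fun k _ => hX k) hS0
    _ = ∫ t in Ioi 0, ∑ j, (∏ i ∈ Finset.univ.erase j, r i / (r i - r j)) *
          (exp (-t) / (t + r j)) :=
        setIntegral_congr_fun measurableSet_Ioi fun t ht =>
          exp_neg_mul_one_sub_mgf_sum_div hindep hX hr hinj hmap ht
    _ = _ := by
        rw [integral_finsetSum _ fun j _ => (integrableOn_exp_neg_div_add (hr j)).const_mul _]
        simp only [integral_const_mul, integral_exp_neg_div_add]

end Hypoexponential

theorem expectation_log_one_add_hypoexponential_general {Ω : Type*} [MeasurableSpace Ω] (P : Measure Ω)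
    (K : ℕ) (γ : Fin K → Ω → ℝ) (lam : Fin K → ℝ) (hlam : ∀ k, 0 < lam k)
    (hdist : ∀ i j, i ≠ j → lam i ≠ lam j)
    (hindep : iIndepFun γ P)
    (hexp : ∀ k, P.map (γ k) = volume.withDensity (exponentialPDF (lam k)⁻¹)) :
    ∫ ω, Real.logb 2 (1 + ∑ k, γ k ω) ∂P
      = -(1 / Real.log 2) * ∑ i, Real.exp (1 / lam i) * Ei (-(1 / lam i)) *
          ∏ j ∈ Finset.univ.erase i, lam i / (lam i - lam j) := by
  have hrate : Function.Injective fun k => (lam k)⁻¹ := fun i j h =>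
    by_contra fun hij => hdist i j hij (inv_injective h)
  have hcoeff : ∀ j, ∏ i ∈ Finset.univ.erase j, (lam i)⁻¹ / ((lam i)⁻¹ - (lam j)⁻¹) =
      ∏ i ∈ Finset.univ.erase j, lam j / (lam j - lam i) := fun j =>
    Finset.prod_congr rfl fun i _ => inv_div_inv_sub_inv (hlam i).ne' (hlam j).ne'
  simp only [logb, integral_div, integral_log_one_add_sum_of_exponential hindep
    (fun k => inv_pos.2 (hlam k)) hrate hexp, hcoeff, one_div, Finset.mul_sum, Finset.sum_div]
  refine Finset.sum_congr rfl fun j _ => ?_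
  ring

/-- For independent exponentials `γ₁, …, γ_K` with pairwise distinct means `λ_k > 0`,
`E[log₂(1 + Σ_k γ_k)] = -(1/ln 2) Σ_i e^{1/λ_i} Ei(-1/λ_i) Π_{j≠i} λ_i/(λ_i - λ_j)`. -/
theorem expectation_log_one_add_hypoexponential {Ω : Type*} [MeasurableSpace Ω] (P : Measure Ω)
    [IsProbabilityMeasure P] (K : ℕ) (hK : 1 ≤ K) (γ : Fin K → Ω → ℝ)
    (hmeas : ∀ k, Measurable (γ k)) (lam : Fin K → ℝ) (hlam : ∀ k, 0 < lam k)
    (hdist : ∀ i j, i ≠ j → lam i ≠ lam j)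
    (hindep : iIndepFun γ P)
    (hexp : ∀ k, P.map (γ k) = volume.withDensity (exponentialPDF (lam k)⁻¹)) :
    ∫ ω, Real.logb 2 (1 + ∑ k, γ k ω) ∂P
      = -(1 / Real.log 2) * ∑ i, Real.exp (1 / lam i) * Ei (-(1 / lam i)) *
          ∏ j ∈ Finset.univ.erase i, lam i / (lam i - lam j) :=
  expectation_log_one_add_hypoexponential_general P K γ lam hlam hdist hindep hexp
end

section
/- With R_D(N) = log₂(1 + ρ N A₁ + ρ d + ρ N A₂ + ρ N(N−1) A₃) and R_E(N) = −(1/ln2) e^{1/λ(N)} Ei(−1/λ(N)) where λ(N) = ρ(c + N B), the secrecy rate R_D(N) − R_E(N) − log₂ N converges to log₂(A₃) − log₂ B + κ/ln 2 as N → ∞. -/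
/-!
With `E₁(ε) = ∫_ε^∞ e^{-t}/t dt = -Ei(-ε)`, an integration by parts gives
`E₁(ε) + log ε = (1 - e^{-ε}) log ε + ∫_ε^∞ e^{-t} log t dt`, which tends to
`∫_0^∞ e^{-t} log t dt = Γ'(1) = -γ` as `ε → 0⁺`; the same holds for `e^ε E₁(ε) + log ε`.
With `ε = 1/λ(N)` this says `R_E(N) = (log λ(N) - γ)/ln 2 + o(1)`, while
`R_D(N) = log₂(ρ A₃ N²) + o(1)` and `log λ(N) = log(ρ B N) + o(1)`.
-/

open MeasureTheory Real Filter Topology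

open Set

noncomputable def expIntegralE1 (x : ℝ) : ℝ := ∫ t in Ioi x, exp (-t) / t

theorem Ei_neg (x : ℝ) : Ei (-x) = -expIntegralE1 x := by
  rw [Ei, neg_neg, expIntegralE1]

theorem integral_exp_neg_mul_log_Ioi :
    ∫ t in Ioi 0, exp (-t) * log t = -eulerMascheroniConstant := by
  have hGamma : Complex.GammaIntegral =ᶠ[𝓝 1] Complex.Gamma := by
    filter_upwards [(isOpen_lt continuous_const Complex.continuous_re).mem_nhds
      (by norm_num : (0 : ℝ) < (1 : ℂ).re)] with s hs
    exact (Complex.Gamma_eq_integral hs).symm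
  have hderiv := (Complex.hasDerivAt_GammaIntegral (s := 1) (by norm_num)).unique
    (Complex.hasDerivAt_Gamma_one.congr_of_eventuallyEq hGamma)
  rw [setIntegral_congr_fun measurableSet_Ioi (g := fun t : ℝ => ((exp (-t) * log t : ℝ) : ℂ))
    fun t _ => by rw [sub_self, Complex.cpow_zero]; push_cast; ring,
    integral_complex_ofReal] at hderiv
  exact_mod_cast hderiv

theorem integrableOn_exp_neg_mul_log_Ioi :
    IntegrableOn (fun t => exp (-t) * log t) (Ioi 0) :=
  .of_integral_ne_zero <| by
    rw [integral_exp_neg_mul_log_Ioi, neg_ne_zero]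
    exact (one_half_pos.trans one_half_lt_eulerMascheroniConstant).ne'

theorem integrableOn_exp_neg_div_Ioi {ε : ℝ} (hε : 0 < ε) :
    IntegrableOn (fun t => exp (-t) / t) (Ioi ε) := by
  refine Integrable.mono' ((exp_neg_integrableOn_Ioi ε one_pos).const_mul ε⁻¹)
    ((continuousOn_id.neg.rexp.div continuousOn_id fun t ht => (hε.trans ht).ne')
      |>.aestronglyMeasurable measurableSet_Ioi) ?_
  filter_upwards [self_mem_ae_restrict measurableSet_Ioi] with t (ht : ε < t)
  rw [norm_div, norm_of_nonneg (exp_pos _).le, norm_of_nonneg (hε.trans ht).le, neg_one_mul,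
    div_eq_mul_inv, mul_comm]
  exact mul_le_mul_of_nonneg_right (inv_anti₀ hε ht.le) (exp_pos _).le

theorem tendsto_exp_neg_mul_log_atTop : Tendsto (fun t => exp (-t) * log t) atTop (𝓝 0) := by
  refine squeeze_zero' ?_ ?_ (tendsto_pow_mul_exp_neg_atTop_nhds_zero 1)
  all_goals filter_upwards [eventually_ge_atTop 1] with t ht
  · exact mul_nonneg (exp_pos _).le (log_nonneg ht)
  · rw [pow_one, mul_comm]
    exact mul_le_mul_of_nonneg_right ((log_le_sub_one_of_pos (by linarith)).trans (by linarith))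
      (exp_pos _).le

theorem tendsto_exp_mul_sub_one_mul_log (a : ℝ) :
    Tendsto (fun x => (exp (a * x) - 1) * log x) (𝓝[>] 0) (𝓝 0) := by
  have hsmall : ∀ᶠ x in 𝓝[>] (0 : ℝ), |a * x| ≤ 1 :=
    nhdsWithin_le_nhds <| (continuous_const.mul continuous_id).abs.tendsto' 0 0 (by simp)
      |>.eventually (ge_mem_nhds one_pos)
  refine squeeze_zero_norm' ?_ (((tendsto_log_mul_rpow_nhdsGT_zero one_pos).abs.const_mul
    (2 * |a|)).trans_eq (by simp))
  filter_upwards [hsmall] with x hx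
  calc ‖(exp (a * x) - 1) * log x‖ ≤ 2 * |a * x| * |log x| := by
        rw [norm_mul, norm_eq_abs, norm_eq_abs]
        exact mul_le_mul_of_nonneg_right (abs_exp_sub_one_le hx) (abs_nonneg _)
    _ = 2 * |a| * |log x * x ^ (1 : ℝ)| := by rw [rpow_one, abs_mul, abs_mul]; ring

theorem expIntegralE1_eq {ε : ℝ} (hε : 0 < ε) :
    expIntegralE1 ε = -(exp (-ε) * log ε) + ∫ t in Ioi ε, exp (-t) * log t := by
  have hparts := integral_Ioi_mul_deriv_eq_deriv_mul (a := ε) (a' := exp (-ε) * log ε) (b' := 0)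
    (u := fun t => exp (-t)) (v := log) (u' := fun t => -exp (-t)) (v' := fun t => t⁻¹)
    (fun t _ => by simpa using (hasDerivAt_neg t).exp)
    (fun t ht => hasDerivAt_log (hε.trans ht).ne')
    (by simpa only [Pi.mul_def, ← div_eq_mul_inv] using integrableOn_exp_neg_div_Ioi hε)
    (by simpa only [Pi.mul_def, Pi.neg_def, neg_mul] using
      (integrableOn_exp_neg_mul_log_Ioi.mono_set (Ioi_subset_Ioi hε.le)).neg)
    ((continuous_neg.rexp.continuousAt.mul (continuousAt_log hε.ne')).tendsto.mono_left
      nhdsWithin_le_nhds)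
    tendsto_exp_neg_mul_log_atTop
  simp only [← div_eq_mul_inv, neg_mul, integral_neg] at hparts
  rw [expIntegralE1, hparts]
  ring

theorem tendsto_expIntegralE1_add_log :
    Tendsto (fun ε => expIntegralE1 ε + log ε) (𝓝[>] 0) (𝓝 (-eulerMascheroniConstant)) := by
  have htail : Tendsto (fun ε => ∫ t in Ioi ε, exp (-t) * log t) (𝓝[>] 0)
      (𝓝 (-eulerMascheroniConstant)) :=
    integral_exp_neg_mul_log_Ioi ▸
      integrableOn_exp_neg_mul_log_Ioi.continuousWithinAt_Ici_primitive_Ioi.mono Ioi_subset_Ici_self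
  convert ((tendsto_exp_mul_sub_one_mul_log (-1)).neg.add htail).congr' ?_ using 2
  · rw [neg_zero, zero_add]
  filter_upwards [self_mem_nhdsWithin] with ε (hε : 0 < ε)
  rw [expIntegralE1_eq hε]
  ring_nf

theorem tendsto_exp_mul_expIntegralE1_add_log :
    Tendsto (fun ε => exp ε * expIntegralE1 ε + log ε) (𝓝[>] 0)
      (𝓝 (-eulerMascheroniConstant)) := by
  have hexp : Tendsto exp (𝓝[>] 0) (𝓝 1) :=
    (continuous_exp.tendsto' 0 1 exp_zero).mono_left nhdsWithin_le_nhds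
  convert ((hexp.mul tendsto_expIntegralE1_add_log).sub
    (tendsto_exp_mul_sub_one_mul_log 1)).congr fun ε => ?_ using 2
  · rw [one_mul, sub_zero]
  rw [one_mul]
  ring

theorem tendsto_add_mul_div_natCast (a b : ℝ) :
    Tendsto (fun N : ℕ => (a + b * N) / N) atTop (𝓝 b) := by
  refine ((by fun_prop : Continuous fun x : ℝ => a * x + b).tendsto' 0 b (by simp)).comp
    tendsto_inv_atTop_nhds_zero_nat |>.congr' ?_
  filter_upwards [eventually_ne_atTop 0] with N hN
  simp only [Function.comp_apply]
  field_simp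

theorem tendsto_add_mul_add_mul_sq_div_natCast_sq (a b e : ℝ) :
    Tendsto (fun N : ℕ => (a + b * N + e * N ^ 2) / (N : ℝ) ^ 2) atTop (𝓝 e) := by
  refine ((by fun_prop : Continuous fun x : ℝ => a * x ^ 2 + b * x + e).tendsto' 0 e
    (by simp)).comp tendsto_inv_atTop_nhds_zero_nat |>.congr' ?_
  filter_upwards [eventually_ne_atTop 0] with N hN
  simp only [Function.comp_apply]
  field_simp

theorem secrecy_rate_scaling_general (ρ A₁ A₂ A₃ d c B : ℝ) (hρ : 0 < ρ) (hA₃ : 0 < A₃) (hB : 0 < B) :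
    Tendsto (fun N : ℕ =>
        Real.logb 2 (1 + ρ * N * A₁ + ρ * d + ρ * N * A₂ + ρ * N * (N - 1) * A₃)
          - (-(1 / Real.log 2) *
              (Real.exp (1 / (ρ * (c + N * B))) * Ei (-(1 / (ρ * (c + N * B))))))
          - Real.logb 2 N) atTop
      (𝓝 (Real.logb 2 A₃ - Real.logb 2 B + Real.eulerMascheroniConstant / Real.log 2)) := by
  set P : ℕ → ℝ := fun N => 1 + ρ * N * A₁ + ρ * d + ρ * N * A₂ + ρ * N * (N - 1) * A₃
  set lam : ℕ → ℝ := fun N => ρ * (c + N * B)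
  have hP : Tendsto (fun N => P N / (N : ℝ) ^ 2) atTop (𝓝 (ρ * A₃)) := by
    convert tendsto_add_mul_add_mul_sq_div_natCast_sq (1 + ρ * d) (ρ * (A₁ + A₂ - A₃)) (ρ * A₃)
      using 3
    ring
  have hlam : Tendsto (fun N => lam N / N) atTop (𝓝 (ρ * B)) := by
    convert tendsto_add_mul_div_natCast (ρ * c) (ρ * B) using 3
    ring
  have hlam_top : Tendsto lam atTop atTop :=
    tendsto_atTop_add_const_left _ _ (tendsto_natCast_atTop_atTop.atTop_mul_const hB)
      |>.const_mul_atTop hρ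
  have hE := tendsto_exp_mul_expIntegralE1_add_log.comp
    (tendsto_inv_atTop_nhdsGT_zero.comp hlam_top)
  have hlim := (((hP.log (by positivity)).sub (hlam.log (by positivity))).sub hE).const_mul
    (log 2)⁻¹
  convert hlim.congr' ?_ using 2
  · rw [log_mul hρ.ne' hA₃.ne', log_mul hρ.ne' hB.ne', logb, logb]
    field_simp
    ring
  filter_upwards [eventually_ne_atTop 0, hP.eventually_ne (by positivity),
    hlam.eventually_ne (by positivity)] with N hN hPN hlamN
  rw [log_div (div_ne_zero_iff.1 hPN).1 (by positivity),
    log_div (div_ne_zero_iff.1 hlamN).1 (by positivity), log_pow]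
  simp only [Function.comp_apply, one_div, Ei_neg, logb, log_inv, P, lam]
  field_simp
  ring

/-- With `R_D(N) = log₂(1 + ρNA₁ + ρd + ρNA₂ + ρN(N-1)A₃)` and
`R_E(N) = -(1/ln2) e^{1/λ(N)} Ei(-1/λ(N))` with `λ(N) = ρ(c + NB)`,
`R_D(N) - R_E(N) - log₂ N → log₂ A₃ - log₂ B + κ/ln 2` as `N → ∞`. -/
theorem secrecy_rate_scaling (ρ A₁ A₂ A₃ d c B : ℝ) (hρ : 0 < ρ) (hA₁ : 0 ≤ A₁)
    (hA₂ : 0 ≤ A₂) (hA₃ : 0 < A₃) (hd : 0 ≤ d) (hc : 0 ≤ c) (hB : 0 < B) :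
    Tendsto (fun N : ℕ =>
        Real.logb 2 (1 + ρ * N * A₁ + ρ * d + ρ * N * A₂ + ρ * N * (N - 1) * A₃)
          - (-(1 / Real.log 2) *
              (Real.exp (1 / (ρ * (c + N * B))) * Ei (-(1 / (ρ * (c + N * B))))))
          - Real.logb 2 N) atTop
      (𝓝 (Real.logb 2 A₃ - Real.logb 2 B + Real.eulerMascheroniConstant / Real.log 2)) :=
  secrecy_rate_scaling_general ρ A₁ A₂ A₃ d c B hρ hA₃ hB
end
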